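/- arXiv:1710.01896 — 3 statements merged into one kernel-verified Lean document; each statement's English description precedes it below -/
import Mathlib

section
/- Let 0 ≤ i, j ≤ n−2. If S_i is a B*-suffix, S_j has type B but is not a B*-suffix, T[i] = T[j], and T[i+1] = T[j+1], then S_i is lexicographically smaller than S_j. -/
/-- The suffix `S_i = T[i..n)` of the text `T` of length `n`, as a list. -/
def suff {α : Type*} (T : ℕ → α) (n i : ℕ) : List α :=
  (List.range (n - i)).map (fun t => T (i + t))

/-- `S_i` has type B: there is a `k ≥ i` with `T[k] < T[k+1]` and
`T[m] = T[m+1]` for all `i ≤ m < k`. -/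
def TypeB {α : Type*} [LinearOrder α] (T : ℕ → α) (n i : ℕ) : Prop :=
  ∃ k, i ≤ k ∧ k + 1 < n ∧ T k < T (k + 1) ∧ ∀ m, i ≤ m → m < k → T m = T (m + 1)

/-- `S_i` has type A: either there is a `k ≥ i` with `T[k] > T[k+1]` and
`T[m] = T[m+1]` for all `i ≤ m < k`, or all characters from position `i`
to the end are equal (the type propagates from `S_{n-1}`). -/
def TypeA {α : Type*} [LinearOrder α] (T : ℕ → α) (n i : ℕ) : Prop :=
  (∃ k, i ≤ k ∧ k + 1 < n ∧ T (k + 1) < T k ∧ ∀ m, i ≤ m → m < k → T m = T (m + 1))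
  ∨ (∀ m, i ≤ m → m + 1 < n → T m = T (m + 1))

/-- `S_i` is a B*-suffix: `S_i` has type B and `S_{i+1}` has type A. -/
def TypeBStar {α : Type*} [LinearOrder α] (T : ℕ → α) (n i : ℕ) : Prop :=
  TypeB T n i ∧ TypeA T n (i + 1)

/-- `lcp T n i j` is the largest `s ≥ 0` with `i + s ≤ n`, `j + s ≤ n` and
`T[i+t] = T[j+t]` for all `t < s`. -/
noncomputable def lcp {α : Type*} (T : ℕ → α) (n i j : ℕ) : ℕ :=
  sSup {s | i + s ≤ n ∧ j + s ≤ n ∧ ∀ t, t < s → T (i + t) = T (j + t)}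

lemma suff_cons {α : Type*} (T : ℕ → α) {n p : ℕ} (h : p < n) :
    suff T n p = T p :: suff T n (p + 1) := by
  unfold suff
  have h1 : n - p = (n - (p+1)) + 1 := by omega
  rw [h1, List.range_succ_eq_map, List.map_cons, List.map_map]
  simp only [Nat.add_zero]
  congr 1
  apply List.map_congr_left
  intro t _
  simp [Function.comp]
  congr 1
  omega

lemma suff_eq_nil {α : Type*} (T : ℕ → α) {n p : ℕ} (h : n ≤ p) :
    suff T n p = [] := by
  simp [suff, Nat.sub_eq_zero_of_le h]

lemma run_eq {α : Type*} (T : ℕ → α) (p k : ℕ)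
    (h : ∀ m, p ≤ m → m < k → T m = T (m+1)) :
    ∀ t, p + t ≤ k → T (p + t) = T p := by
  intro t
  induction t with
  | zero => simp
  | succ s ih =>
    intro hle
    have e : p + (s+1) = (p+s) + 1 := by omega
    rw [e, ← h (p+s) (by omega) (by omega)]
    exact ih (by omega)

lemma run_eq' {α : Type*} (T : ℕ → α) (n p : ℕ)
    (h : ∀ m, p ≤ m → m + 1 < n → T m = T (m+1)) :
    ∀ t, p + t < n → T (p + t) = T p := by
  intro t
  induction t with
  | zero => simp
  | succ s ih =>
    intro hle
    have e : p + (s+1) = (p+s) + 1 := by omega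
    rw [e, ← h (p+s) (by omega) (by omega)]
    exact ih (by omega)

lemma lex_of_lt {α : Type*} [LinearOrder α] (T : ℕ → α) (n : ℕ) :
    ∀ s p q, p + s < n → q + s < n → (∀ t, t < s → T (p+t) = T (q+t)) →
      T (p+s) < T (q+s) → List.Lex (· < ·) (suff T n p) (suff T n q) := by
  intro s
  induction s with
  | zero =>
    intro p q hp hq _ hlt
    rw [suff_cons T (show p < n by omega), suff_cons T (show q < n by omega)]
    exact List.Lex.rel (by simpa using hlt)
  | succ s ih =>
    intro p q hp hq heq hlt
    rw [suff_cons T (show p < n by omega), suff_cons T (show q < n by omega)]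
    have h0 : T p = T q := by simpa using heq 0 (by omega)
    rw [h0]
    refine List.Lex.cons (ih (p+1) (q+1) (by omega) (by omega) ?_ ?_)
    · intro t ht
      have := heq (t+1) (by omega)
      have e1 : p+1+t = p+(t+1) := by omega
      have e2 : q+1+t = q+(t+1) := by omega
      rw [e1, e2]; exact this
    · have e1 : p+1+s = p+(s+1) := by omega
      have e2 : q+1+s = q+(s+1) := by omega
      rw [e1, e2]; exact hlt

lemma lex_of_prefix {α : Type*} [LinearOrder α] (T : ℕ → α) (n : ℕ) :
    ∀ d p q, n - p = d → q + d < n → (∀ t, t < d → T (p+t) = T (q+t)) →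
      List.Lex (· < ·) (suff T n p) (suff T n q) := by
  intro d
  induction d with
  | zero =>
    intro p q hd hq _
    rw [suff_eq_nil T (by omega), suff_cons T (show q < n by omega)]
    exact List.Lex.nil
  | succ d ih =>
    intro p q hd hq heq
    rw [suff_cons T (show p < n by omega), suff_cons T (show q < n by omega)]
    have h0 : T p = T q := by simpa using heq 0 (by omega)
    rw [h0]
    refine List.Lex.cons (ih (p+1) (q+1) (by omega) (by omega) ?_)
    intro t ht
    have := heq (t+1) (by omega)
    have e1 : p+1+t = p+(t+1) := by omega
    have e2 : q+1+t = q+(t+1) := by omega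
    rw [e1, e2]; exact this

lemma typeB_of_not_typeA {α : Type*} [LinearOrder α] (T : ℕ → α) (n q : ℕ)
    (h : ¬ TypeA T n q) : TypeB T n q := by
  classical
  have hex : ∃ m, q ≤ m ∧ m + 1 < n ∧ T m ≠ T (m + 1) := by
    by_contra h2
    push_neg at h2
    exact h (Or.inr fun m hm hm' => h2 m hm hm')
  let P : ℕ → Prop := fun m => q ≤ m ∧ m + 1 < n ∧ T m ≠ T (m + 1)
  have hP : ∃ m, P m := hex
  set m := Nat.find hP with hm
  obtain ⟨hqm, hmn, hne⟩ := Nat.find_spec hP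
  have hrun : ∀ m', q ≤ m' → m' < m → T m' = T (m' + 1) := by
    intro m' hq' hlt
    by_contra hc
    exact Nat.find_min hP hlt ⟨hq', by omega, hc⟩
  rcases lt_or_gt_of_ne hne with hlt | hgt
  · exact ⟨m, hqm, hmn, hlt, hrun⟩
  · exact absurd (Or.inl ⟨m, hqm, hmn, hgt, hrun⟩) h

lemma lex_A_B {α : Type*} [LinearOrder α] (T : ℕ → α) (n p q : ℕ)
    (hA : TypeA T n p) (hB : TypeB T n q) (hc : T p = T q) (hpn : p < n) :
    List.Lex (· < ·) (suff T n p) (suff T n q) := by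
  obtain ⟨l, hql, hln, hlt, hrunq⟩ := hB
  set b := l - q with hb
  have hqb : ∀ t, t ≤ b → T (q + t) = T q := fun t ht =>
    run_eq T q l hrunq t (by omega)
  have hqb1 : T q < T (q + (b + 1)) := by
    have e : q + (b + 1) = l + 1 := by omega
    have e2 : q + b = l := by omega
    rw [e]
    calc T q = T (q + b) := (hqb b le_rfl).symm
    _ = T l := by rw [e2]
    _ < T (l + 1) := hlt
  rcases hA with ⟨k, hpk, hkn, hdrop, hrunp⟩ | hall
  · set a := k - p with ha
    have hpa : ∀ t, t ≤ a → T (p + t) = T p := fun t ht =>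
      run_eq T p k hrunp t (by omega)
    have hpa1 : T (p + (a + 1)) < T p := by
      have e : p + (a + 1) = k + 1 := by omega
      have e2 : p + a = k := by omega
      rw [e]
      calc T (k + 1) < T k := hdrop
      _ = T (p + a) := by rw [e2]
      _ = T p := hpa a le_rfl
    rcases le_or_gt a b with hab | hba
    · apply lex_of_lt T n (a + 1) p q (by omega) (by omega)
      · intro t ht
        rw [hpa t (by omega), hqb t (by omega), hc]
      · have hle : T q ≤ T (q + (a + 1)) := by
          rcases eq_or_lt_of_le hab with h | h
          · rw [h]; exact le_of_lt hqb1
          · rw [hqb (a + 1) (by omega)]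
        calc T (p + (a + 1)) < T p := hpa1
        _ = T q := hc
        _ ≤ T (q + (a + 1)) := hle
    · apply lex_of_lt T n (b + 1) p q (by omega) (by omega)
      · intro t ht
        rw [hpa t (by omega), hqb t (by omega), hc]
      · calc T (p + (b + 1)) = T p := hpa (b + 1) (by omega)
        _ = T q := hc
        _ < T (q + (b + 1)) := hqb1
  · have hpt : ∀ t, p + t < n → T (p + t) = T p := run_eq' T n p hall
    rcases le_or_gt (n - p) (b + 1) with hle | hgt
    · apply lex_of_prefix T n (n - p) p q rfl (by omega)
      intro t ht
      rw [hpt t (by omega), hqb t (by omega), hc]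
    · apply lex_of_lt T n (b + 1) p q (by omega) (by omega)
      · intro t ht
        rw [hpt t (by omega), hqb t (by omega), hc]
      · calc T (p + (b + 1)) = T p := hpt (b + 1) (by omega)
        _ = T q := hc
        _ < T (q + (b + 1)) := hqb1

/-- If `S_i` is a B*-suffix, `S_j` has type B but is not a B*-suffix,
`T[i] = T[j]` and `T[i+1] = T[j+1]`, then `S_i` is lexicographically
smaller than `S_j`. -/
theorem stmt_1 {α : Type*} [LinearOrder α] (T : ℕ → α) (n : ℕ) (hn : 1 ≤ n)
    (i j : ℕ) (hi : i ≤ n - 2) (hj : j ≤ n - 2)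
    (hBs : TypeBStar T n i) (hB : TypeB T n j) (hnBs : ¬ TypeBStar T n j)
    (hT0 : T i = T j) (hT1 : T (i + 1) = T (j + 1)) :
    List.Lex (· < ·) (suff T n i) (suff T n j) := by
  obtain ⟨hBi, hAi1⟩ := hBs
  have hn2 : 2 ≤ n := by
    obtain ⟨k, hk1, hk2, _, _⟩ := hB
    omega
  have hBq : TypeB T n (j + 1) :=
    typeB_of_not_typeA T n (j + 1) (fun hA => hnBs ⟨hB, hA⟩)
  rw [suff_cons T (show i < n by omega), suff_cons T (show j < n by omega), hT0]
  exact List.Lex.cons (lex_A_B T n (i + 1) (j + 1) hAi1 hBq hT1 (by omega))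
end

section
/- Let 0 ≤ i, j, k ≤ n−1 with S_i ≤ S_j ≤ S_k in lexicographic order. Then lcp(i,k) = min(lcp(i,j), lcp(j,k)). -/
theorem List.exists_lt_length_and_getElem_le_of_lex_of_take_eq {α : Type*} [LinearOrder α]
    {l₁ l₂ : List α} (h : l₁ = l₂ ∨ List.Lex (· < ·) l₁ l₂) {m : ℕ}
    (htake : l₁.take m = l₂.take m) (hm : m < l₁.length) :
    ∃ hm₂ : m < l₂.length, l₁[m] ≤ l₂[m] := by
  rcases h with rfl | h
  · exact ⟨hm, le_rfl⟩
  induction m generalizing l₁ l₂ with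
  | zero =>
    obtain _ | ⟨a, l₁⟩ := l₁
    · simp at hm
    obtain _ | ⟨b, l₂⟩ := l₂
    · simp at h
    rcases List.cons_lex_cons_iff.1 h with hab | ⟨rfl, -⟩
    · exact ⟨by simp, hab.le⟩
    · exact ⟨by simp, le_rfl⟩
  | succ m ih =>
    obtain _ | ⟨a, l₁⟩ := l₁
    · simp at hm
    obtain _ | ⟨b, l₂⟩ := l₂
    · simp at h
    obtain ⟨rfl, htail⟩ : a = b ∧ l₁.take m = l₂.take m := by simpa using htake
    rcases List.cons_lex_cons_iff.1 h with haa | ⟨-, h⟩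
    · exact absurd haa (lt_irrefl a)
    · simpa using ih htail (by simpa using hm) h

section Suffix

variable {α : Type*} (T : ℕ → α) {n i j m : ℕ}

@[simp]
theorem length_suff : (suff T n i).length = n - i := by
  simp [suff]

@[simp]
theorem getElem_suff {t : ℕ} (ht : t < (suff T n i).length) : (suff T n i)[t] = T (i + t) := by
  simp [suff]

theorem take_suff_eq_take_suff (hi : i + m ≤ n) (hj : j + m ≤ n)
    (h : ∀ t < m, T (i + t) = T (j + t)) : (suff T n i).take m = (suff T n j).take m := by
  simp only [suff, ← List.map_take, List.take_range]
  rw [min_eq_left (by omega), min_eq_left (by omega)]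
  exact List.map_congr_left fun t ht => h t (List.mem_range.1 ht)

theorem lt_and_apply_le_of_suff_lex [LinearOrder α]
    (hij : suff T n i = suff T n j ∨ List.Lex (· < ·) (suff T n i) (suff T n j)) (hi : i + m < n) (hj : j + m ≤ n) (h : ∀ t < m, T (i + t) = T (j + t)) :
    j + m < n ∧ T (i + m) ≤ T (j + m) := by
  obtain ⟨hm, hle⟩ := List.exists_lt_length_and_getElem_le_of_lex_of_take_eq hij
    (take_suff_eq_take_suff T hi.le hj h) (by rw [length_suff]; omega)
  simp only [length_suff, getElem_suff] at hm hle
  exact ⟨by omega, hle⟩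

end Suffix

section Lcp

variable {α : Type*} (T : ℕ → α) {n i j k : ℕ}

theorem bddAbove_lcp_set (n i j : ℕ) :
    BddAbove {s | i + s ≤ n ∧ j + s ≤ n ∧ ∀ t, t < s → T (i + t) = T (j + t)} :=
  ⟨n, fun _ hs => le_of_add_le_right hs.1⟩

theorem le_lcp {s : ℕ} (hi : i + s ≤ n) (hj : j + s ≤ n) (h : ∀ t < s, T (i + t) = T (j + t)) :
    s ≤ lcp T n i j :=
  le_csSup (bddAbove_lcp_set T n i j) ⟨hi, hj, h⟩

theorem lcp_spec (hi : i ≤ n) (hj : j ≤ n) :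
    i + lcp T n i j ≤ n ∧ j + lcp T n i j ≤ n ∧ ∀ t < lcp T n i j, T (i + t) = T (j + t) :=
  Nat.sSup_mem ⟨0, by simpa using ⟨hi, hj⟩⟩ (bddAbove_lcp_set T n i j)

theorem apply_add_lcp_ne (hi : i + lcp T n i j < n) (hj : j + lcp T n i j < n) :
    T (i + lcp T n i j) ≠ T (j + lcp T n i j) := by
  intro heq
  have hagree := (lcp_spec T (n := n) (i := i) (j := j) (by omega) (by omega)).2.2
  have : lcp T n i j + 1 ≤ lcp T n i j :=
    le_lcp T hi hj fun t ht => (Nat.lt_succ_iff_lt_or_eq.1 ht).elim (hagree t) (· ▸ heq)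
  omega

theorem min_lcp_le_lcp (hi : i ≤ n) (hj : j ≤ n) (hk : k ≤ n) :
    min (lcp T n i j) (lcp T n j k) ≤ lcp T n i k := by
  obtain ⟨hij₁, -, hagree_ij⟩ := lcp_spec T hi hj
  obtain ⟨-, hjk₂, hagree_jk⟩ := lcp_spec T hj hk
  refine le_lcp T (by omega) (by omega) fun t ht => ?_
  rw [hagree_ij t (by omega), hagree_jk t (by omega)]

theorem lcp_le_min_lcp [LinearOrder α] (hi : i ≤ n) (hj : j ≤ n) (hk : k ≤ n)
    (hij : suff T n i = suff T n j ∨ List.Lex (· < ·) (suff T n i) (suff T n j))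
    (hjk : suff T n j = suff T n k ∨ List.Lex (· < ·) (suff T n j) (suff T n k)) :
    lcp T n i k ≤ min (lcp T n i j) (lcp T n j k) := by
  obtain ⟨-, hij₂, hagree_ij⟩ := lcp_spec T hi hj
  obtain ⟨-, -, hagree_jk⟩ := lcp_spec T hj hk
  obtain ⟨hik₁, hik₂, hagree_ik⟩ := lcp_spec T hi hk
  have hmatch : ∀ m, m ≤ lcp T n i j → m ≤ lcp T n j k → m < lcp T n i k →
      j + m < n ∧ T (i + m) = T (j + m) ∧ T (j + m) = T (k + m) := by
    intro m hm_ij hm_jk hm_ik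
    have hik : T (i + m) = T (k + m) := hagree_ik m hm_ik
    obtain ⟨hjm, hle_ij⟩ := lt_and_apply_le_of_suff_lex T hij (m := m) (by omega) (by omega)
      fun t ht => hagree_ij t (by omega)
    obtain ⟨-, hle_jk⟩ := lt_and_apply_le_of_suff_lex T hjk (m := m) hjm (by omega)
      fun t ht => hagree_jk t (by omega)
    exact ⟨hjm, le_antisymm hle_ij (hik ▸ hle_jk), le_antisymm hle_jk (hik ▸ hle_ij)⟩
  by_contra! hlt
  rcases min_choice (lcp T n i j) (lcp T n j k) with hm | hm <;> rw [hm] at hlt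
  · obtain ⟨hjm, heq, -⟩ := hmatch _ le_rfl (hm ▸ min_le_right _ _) hlt
    exact apply_add_lcp_ne T (by omega) hjm heq
  · obtain ⟨hjm, -, heq⟩ := hmatch _ (hm ▸ min_le_left _ _) le_rfl hlt
    exact apply_add_lcp_ne T hjm (by omega) heq

end Lcp

theorem stmt_8_general {α : Type*} [LinearOrder α] (T : ℕ → α) (n : ℕ)
    (i j k : ℕ) (hi : i ≤ n - 1) (hj : j ≤ n - 1) (hk : k ≤ n - 1)
    (hij : suff T n i = suff T n j ∨ List.Lex (· < ·) (suff T n i) (suff T n j))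
    (hjk : suff T n j = suff T n k ∨ List.Lex (· < ·) (suff T n j) (suff T n k)) :
    lcp T n i k = min (lcp T n i j) (lcp T n j k) :=
  le_antisymm (lcp_le_min_lcp T (by omega) (by omega) (by omega) hij hjk)
    (min_lcp_le_lcp T (by omega) (by omega) (by omega))

/-- If `S_i ≤ S_j ≤ S_k` lexicographically, then
`lcp(i, k) = min (lcp(i, j)) (lcp(j, k))`. -/
theorem stmt_8 {α : Type*} [LinearOrder α] (T : ℕ → α) (n : ℕ) (hn : 1 ≤ n)
    (i j k : ℕ) (hi : i ≤ n - 1) (hj : j ≤ n - 1) (hk : k ≤ n - 1)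
    (hij : suff T n i = suff T n j ∨ List.Lex (· < ·) (suff T n i) (suff T n j))
    (hjk : suff T n j = suff T n k ∨ List.Lex (· < ·) (suff T n j) (suff T n k)) :
    lcp T n i k = min (lcp T n i j) (lcp T n j k) :=
  stmt_8_general T n i j k hi hj hk hij hjk
end

section
/- For every position i with 0 ≤ i < n−1 such that ISA[i] ≥ 1 and ISA[i+1] ≥ 1, it holds that lcp(i+1, Φ(i+1)) ≥ lcp(i, Φ(i)) − 1, where Φ(p) = SA[ISA[p]−1] denotes the starting position of the immediate lexicographic predecessor suffix of S_p. -/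
namespace List

variable {α : Type*} [LinearOrder α]

theorem nil_le' (l : List α) : [] ≤ l :=
  (lex_nil_or_eq_nil l).elim (fun h => le_of_lt h) (fun h => h ▸ le_rfl)

theorem cons_le_cons_iff' {a b : α} {s t : List α} :
    a :: s ≤ b :: t ↔ a < b ∨ a = b ∧ s ≤ t := by
  simp only [le_iff_lt_or_eq, cons_lt_cons_iff, cons.injEq]
  tauto

theorem IsPrefix.of_le_of_le {p l₁ l₂ l₃ : List α} (h₁ : p <+: l₁) (h₃ : p <+: l₃)
    (h₁₂ : l₁ ≤ l₂) (h₂₃ : l₂ ≤ l₃) : p <+: l₂ := by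
  induction p generalizing l₁ l₂ l₃ with
  | nil => exact nil_prefix
  | cons a p ih =>
    obtain ⟨t₁, rfl, hp₁⟩ : ∃ t₁, l₁ = a :: t₁ ∧ p <+: t₁ := by
      cases l₁ <;> simp_all [cons_prefix_cons]
    obtain ⟨t₃, rfl, hp₃⟩ : ∃ t₃, l₃ = a :: t₃ ∧ p <+: t₃ := by
      cases l₃ <;> simp_all [cons_prefix_cons]
    rcases l₂ with _ | ⟨b, t₂⟩
    · exact absurd (h₁₂.trans_lt Lex.nil) (lt_irrefl _)
    rw [cons_le_cons_iff'] at h₁₂ h₂₃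
    obtain rfl : a = b := le_antisymm
      (h₁₂.elim le_of_lt fun h => h.1.le) (h₂₃.elim le_of_lt fun h => h.1.le)
    simp only [lt_irrefl, true_and, false_or] at h₁₂ h₂₃
    exact cons_prefix_cons.2 ⟨rfl, ih hp₁ hp₃ h₁₂ h₂₃⟩

end List

section Suffix

variable {α : Type*} (T : ℕ → α) (n : ℕ)

theorem suff_eq_nil_s11 {k : ℕ} (hk : n ≤ k) : suff T n k = [] := by
  simp [suff, Nat.sub_eq_zero_of_le hk]

theorem suff_eq_cons {k : ℕ} (hk : k < n) : suff T n k = T k :: suff T n (k + 1) := by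
  rw [suff, show n - k = n - (k + 1) + 1 by omega, List.range_succ_eq_map]
  simp [suff, Function.comp_def, Nat.add_right_comm, Nat.add_assoc]

theorem cons_prefix_suff_iff {a : α} {q : List α} {k : ℕ} :
    a :: q <+: suff T n k ↔ k < n ∧ a = T k ∧ q <+: suff T n (k + 1) := by
  rcases lt_or_ge k n with hk | hk
  · simp [suff_eq_cons T n hk, List.cons_prefix_cons, hk]
  · simp [suff_eq_nil_s11 T n hk, hk.not_gt]

theorem prefix_suff_iff {p : List α} {k : ℕ} :
    p <+: suff T n k ↔ p.length ≤ n - k ∧ ∀ t (ht : t < p.length), p[t] = T (k + t) := by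
  simp [List.prefix_iff_getElem, suff]

theorem length_le_lcp {p : List α} {i j : ℕ} (hi : p <+: suff T n i) (hj : p <+: suff T n j) :
    p.length ≤ lcp T n i j := by
  rcases Nat.eq_zero_or_pos p.length with h0 | hpos
  · exact h0 ▸ Nat.zero_le _
  rw [prefix_suff_iff] at hi hj
  refine le_csSup ⟨n, fun s hs => by have := hs.1; omega⟩
    ⟨by omega, by omega, fun t ht => ?_⟩
  rw [← hi.2 t ht, ← hj.2 t ht]

theorem exists_prefix_length_eq_lcp (i j : ℕ) :
    ∃ p : List α, p.length = lcp T n i j ∧ p <+: suff T n i ∧ p <+: suff T n j := by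
  set S := {s | i + s ≤ n ∧ j + s ≤ n ∧ ∀ t, t < s → T (i + t) = T (j + t)}
  change ∃ p : List α, p.length = sSup S ∧ _
  rcases S.eq_empty_or_nonempty with hS | hS
  · exact ⟨[], by rw [hS, csSup_empty]; rfl, List.nil_prefix, List.nil_prefix⟩
  obtain ⟨hi, hj, heq⟩ := Nat.sSup_mem hS ⟨n, fun s hs => by have := hs.1; omega⟩
  refine ⟨(List.range (sSup S)).map (fun t => T (i + t)), by simp, ?_, ?_⟩
  · simp only [prefix_suff_iff, List.length_map, List.length_range]
    exact ⟨by omega, by simp⟩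
  · simp only [prefix_suff_iff, List.length_map, List.length_range]
    exact ⟨by omega, by simpa using heq⟩

end Suffix

section SuffixArray

variable {α : Type*} [LinearOrder α] {T : ℕ → α} {n : ℕ} {SA ISA : ℕ → ℕ}

theorem lt_of_suff_lt {k m : ℕ} (h : suff T n k < suff T n m) : m < n := by
  by_contra hm
  rw [suff_eq_nil_s11 T n (not_lt.1 hm)] at h
  exact List.not_lt_nil _ h

theorem suff_pred_le (hsort : StrictMonoOn (fun u => suff T n (SA u)) (Set.Iio n))
    (hISA : ∀ p, p < n → ISA p < n ∧ SA (ISA p) = p) {m : ℕ} (hm : m < n) :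
    suff T n (SA (ISA m - 1)) ≤ suff T n m := by
  obtain ⟨hmn, hSA⟩ := hISA m hm
  simpa [hSA] using hsort.monotoneOn (Set.mem_Iio.2 (by omega)) hmn (Nat.sub_le (ISA m) 1)

theorem suff_le_suff_pred_of_lt (hsort : StrictMonoOn (fun u => suff T n (SA u)) (Set.Iio n))
    (hISA : ∀ p, p < n → ISA p < n ∧ SA (ISA p) = p) {k m : ℕ}
    (h : suff T n k < suff T n m) : suff T n k ≤ suff T n (SA (ISA m - 1)) := by
  rcases lt_or_ge k n with hk | hk
  · obtain ⟨hkn, hSAk⟩ := hISA k hk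
    obtain ⟨hmn, hSAm⟩ := hISA m (lt_of_suff_lt h)
    have hrank : ISA k < ISA m := by
      rw [← hsort.lt_iff_lt hkn hmn]
      simpa [hSAk, hSAm] using h
    simpa [hSAk] using hsort.monotoneOn hkn (Set.mem_Iio.2 (by omega)) (Nat.le_sub_one_of_lt hrank)
  · rw [suff_eq_nil_s11 T n hk]
    exact List.nil_le' _

end SuffixArray

theorem stmt_11_general {α : Type*} [LinearOrder α] (T : ℕ → α) (n : ℕ)
    (SA ISA : ℕ → ℕ)
    (hSAsorted : ∀ u v, u < v → v < n →
      List.Lex (· < ·) (suff T n (SA u)) (suff T n (SA v)))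
    (hISA : ∀ p, p < n → ISA p < n ∧ SA (ISA p) = p)
    (i : ℕ) (hISAi : 1 ≤ ISA i) :
    lcp T n i (SA (ISA i - 1)) - 1 ≤ lcp T n (i + 1) (SA (ISA (i + 1) - 1)) := by
  have hsort : StrictMonoOn (fun u => suff T n (SA u)) (Set.Iio n) :=
    fun u _ v hv huv => hSAsorted u v huv hv
  obtain ⟨p, hp, hpi, hpj⟩ := exists_prefix_length_eq_lcp T n i (SA (ISA i - 1))
  rcases p with _ | ⟨a, q⟩
  · simp [← hp]
  obtain ⟨hi, rfl, hqi⟩ := (cons_prefix_suff_iff T n).1 hpi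
  obtain ⟨hj, hTj, hqj⟩ := (cons_prefix_suff_iff T n).1 hpj
  obtain ⟨hri, hSAi⟩ := hISA i hi
  have hpred : suff T n (SA (ISA i - 1)) < suff T n i := by
    simpa [hSAi] using hsort (Set.mem_Iio.2 (by omega)) hri (by omega)
  have hpred_tail : suff T n (SA (ISA i - 1) + 1) < suff T n (i + 1) := by
    simpa [suff_eq_cons T n hj, suff_eq_cons T n hi, ← hTj] using hpred
  rw [← hp, List.length_cons, Nat.add_sub_cancel]
  exact length_le_lcp T n hqi <| hqj.of_le_of_le hqi
    (suff_le_suff_pred_of_lt hsort hISA hpred_tail)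
    (suff_pred_le hsort hISA (lt_of_suff_lt hpred_tail))

/-- Sparse Φ-algorithm inequality: `lcp(i+1, Φ(i+1)) ≥ lcp(i, Φ(i)) - 1`,
where `Φ(p) = SA[ISA[p] - 1]` is the immediate lexicographic predecessor. -/
theorem stmt_11 {α : Type*} [LinearOrder α] (T : ℕ → α) (n : ℕ) (hn : 1 ≤ n)
    (SA ISA : ℕ → ℕ)
    (hSAlt : ∀ u, u < n → SA u < n)
    (hSAsorted : ∀ u v, u < v → v < n →
      List.Lex (· < ·) (suff T n (SA u)) (suff T n (SA v)))
    (hSAsurj : ∀ p, p < n → ∃ u, u < n ∧ SA u = p)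
    (hISA : ∀ p, p < n → ISA p < n ∧ SA (ISA p) = p)
    (i : ℕ) (hi : i < n - 1) (hISAi : 1 ≤ ISA i) (hISAi1 : 1 ≤ ISA (i + 1)) :
    lcp T n i (SA (ISA i - 1)) - 1 ≤ lcp T n (i + 1) (SA (ISA (i + 1) - 1)) :=
  stmt_11_general T n SA ISA hSAsorted hISA i hISAi
end
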